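/- Fix an integer b ≥ 2 and constants β > 0 and η > 0. Let (ε_n)_{n≥2} be a sequence of positive reals with ε_n ≥ n^{−1/2}(log n)^{1/2+η} for every n ≥ 2, and for j ≥ 2 set S_j = ⌊exp((j (log j)^η)^{1/(1+2η)})⌋ and ρ_j = (log j)^{1+η}. Then the double series ∑_{j≥2} b^{j} b^{ρ_j} ∑_{n≥S_j} n b^{−β n ε_n^2} converges. -/

import Mathlib

/-- `S_j = ⌊exp((j (log j)^η)^{1/(1+2η)})⌋`. -/
noncomputable def Sgrowth (η : ℝ) (j : ℕ) : ℕ :=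
  ⌊Real.exp (((j : ℝ) * Real.log j ^ η) ^ ((1:ℝ) / (1 + 2 * η)))⌋₊

/-- The general term `n b^{-β n ε_n²}`. -/
noncomputable def termG (b : ℕ) (β : ℝ) (ε : ℕ → ℝ) (n : ℕ) : ℝ :=
  (n : ℝ) * (b : ℝ) ^ (-(β * (n : ℝ) * ε n ^ 2))

/-!
The hypothesis gives `n ε_n² ≥ (log n)^{1+2η}`, so the `n`-th term is at most
`n e^{-K (log n)^{1+2η}}` with `K = β log b`, a summable sequence. For `n ≥ S_j` we have
`log n ≥ x_j - 1`, where `x_j = (j (log j)^η)^{1/(1+2η)}`; splitting off half of the exponent bounds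
the tail from `S_j` by `C e^{-(K/2)(x_j - 1)^{1+2η}} ≤ C e^{-c j (log j)^η}`. Since `(log j)^η → ∞`,
this beats the weight `b^j b^{(log j)^{1+η}} = e^{O(j)}`, so the outer terms are `O(e^{-j})`.
-/

open Filter Real

noncomputable def logExpDecay (c p : ℝ) (n : ℕ) : ℝ := n * exp (-c * log n ^ p)

lemma logExpDecay_nonneg (c p : ℝ) (n : ℕ) : 0 ≤ logExpDecay c p n := by
  unfold logExpDecay; positivity

lemma summable_logExpDecay {c p : ℝ} (hc : 0 < c) (hp : 1 < p) :
    Summable (logExpDecay c p) := by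
  have hlog : Tendsto (fun n : ℕ => log n) atTop atTop :=
    tendsto_log_atTop.comp tendsto_natCast_atTop_atTop
  refine .of_norm_bounded_eventually_nat (summable_nat_rpow.2 (by norm_num : (-2:ℝ) < -1)) ?_
  filter_upwards [((tendsto_rpow_atTop (by linarith : 0 < p - 1)).comp hlog).eventually_ge_atTop
    (3 / c), hlog.eventually_gt_atTop 0, eventually_gt_atTop 0] with n hlarge hlog0 hn
  have hn : (0:ℝ) < n := by exact_mod_cast hn
  -- `c (log n)^p ≥ 3 log n`, so the term is at most `n e^{-3 log n} = n^{-2}`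
  have hdom : 3 * log n ≤ c * log n ^ p := by
    have : 3 ≤ c * log n ^ (p - 1) := (div_le_iff₀' hc).1 hlarge
    calc 3 * log n ≤ c * log n ^ (p - 1) * log n := by gcongr
      _ = c * log n ^ p := by rw [mul_assoc, ← rpow_add_one hlog0.ne', sub_add_cancel]
  rw [norm_of_nonneg (logExpDecay_nonneg c p n), logExpDecay, rpow_def_of_pos hn,
    ← exp_log hn, ← exp_add, log_exp]
  exact exp_le_exp.2 (by linarith)

lemma logExpDecay_le_exp_mul {c p y : ℝ} {n : ℕ} (hc : 0 ≤ c) (hp : 0 ≤ p) (hy : 0 ≤ y)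
    (hn : y ≤ log n) : logExpDecay c p n ≤ exp (-(c / 2) * y ^ p) * logExpDecay (c / 2) p n := by
  have : y ^ p ≤ log n ^ p := rpow_le_rpow hy hn hp
  rw [logExpDecay, logExpDecay, mul_left_comm, ← exp_add]
  gcongr
  nlinarith

lemma tsum_logExpDecay_nat_add_le {c p y : ℝ} {S : ℕ} (hc : 0 < c) (hp : 1 < p) (hy : 0 ≤ y)
    (hS : exp y ≤ S) :
    ∑' n, logExpDecay c p (S + n) ≤ exp (-(c / 2) * y ^ p) * ∑' n, logExpDecay (c / 2) p n := by
  have hsum := summable_logExpDecay (half_pos hc) hp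
  have hlog (n : ℕ) : y ≤ log ↑(S + n) := by
    rw [← log_exp y]
    exact log_le_log (exp_pos y) (hS.trans (by simp))
  calc ∑' n, logExpDecay c p (S + n)
      ≤ ∑' n, exp (-(c / 2) * y ^ p) * logExpDecay (c / 2) p (S + n) :=
        Summable.tsum_le_tsum (fun n => logExpDecay_le_exp_mul hc.le (by linarith) hy (hlog n))
          ((summable_logExpDecay hc hp).comp_injective (add_right_injective S))
          ((hsum.comp_injective (add_right_injective S)).mul_left _)
    _ = exp (-(c / 2) * y ^ p) * ∑' n, logExpDecay (c / 2) p (S + n) := tsum_mul_left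
    _ ≤ _ := by
        gcongr ?_ * ?_
        exact tsum_comp_le_tsum_of_inj hsum (logExpDecay_nonneg _ _) (add_right_injective S)

lemma log_rpow_le_mul_sq {x e η : ℝ} (hx : 1 ≤ x)
    (h : x ^ (-(1:ℝ) / 2) * log x ^ ((1:ℝ) / 2 + η) ≤ e) : log x ^ (1 + 2 * η) ≤ x * e ^ 2 := by
  have hx0 : 0 < x := by linarith
  have hlog : 0 ≤ log x := log_nonneg hx
  have hsq := pow_le_pow_left₀ (by positivity) h 2
  rw [mul_pow, ← rpow_natCast, ← rpow_natCast (log x ^ _), ← rpow_mul hx0.le,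
    ← rpow_mul hlog] at hsq
  norm_num at hsq
  rw [rpow_neg_one] at hsq
  calc log x ^ (1 + 2 * η) = x * (x⁻¹ * log x ^ (1 + 2 * η)) := by field_simp
    _ ≤ x * e ^ 2 := by gcongr; convert hsq using 3; ring

lemma exp_sub_one_le_floor_exp {x : ℝ} (hx : 1 ≤ x) : exp (x - 1) ≤ ⌊exp x⌋₊ := by
  have hfloor := Nat.sub_one_lt_floor (exp x)
  have : exp (x - 1) * (exp 1 - 1) = exp x - exp (x - 1) := by
    rw [mul_sub, ← exp_add, sub_add_cancel, mul_one]
  nlinarith [exp_one_gt_d9, exp_le_exp.2 (by linarith : 0 ≤ x - 1), add_one_le_exp (x - 1)]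

lemma div_two_rpow_le_rpow_inv_sub_one_rpow {t p : ℝ} (ht : 0 ≤ t) (hp : 0 < p)
    (h : 2 ≤ t ^ (1 / p)) : t / 2 ^ p ≤ (t ^ (1 / p) - 1) ^ p := by
  calc t / 2 ^ p = (t ^ (1 / p) / 2) ^ p := by
        rw [div_rpow (by positivity) zero_le_two, ← rpow_mul ht, one_div_mul_cancel hp.ne',
          rpow_one]
    _ ≤ (t ^ (1 / p) - 1) ^ p := by gcongr; linarith

lemma eventually_rpow_mul_exp_le_exp_neg {b c η : ℝ} (hb : 1 ≤ b) (hc : 0 < c) (hη : 0 < η) :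
    ∀ᶠ m : ℕ in atTop,
      b ^ m * b ^ (log m ^ (1 + η)) * exp (-c * (m * log m ^ η)) ≤ exp (-m) := by
  have hlog : Tendsto (fun m : ℕ => log m) atTop atTop :=
    tendsto_log_atTop.comp tendsto_natCast_atTop_atTop
  have hsmall : ∀ᶠ m : ℕ in atTop, log m ^ (1 + η) ≤ m := by
    filter_upwards [((isLittleO_log_rpow_rpow_atTop (1 + η) one_pos).bound one_pos).natCast_atTop,
      hlog.eventually_ge_atTop 0] with m hm hlog0
    simpa [abs_of_nonneg (rpow_nonneg hlog0 _)] using hm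
  filter_upwards [hsmall, ((tendsto_rpow_atTop hη).comp hlog).eventually_ge_atTop
    ((2 * log b + 1) / c)] with m hρ hlarge
  have hL : 0 ≤ log b := log_nonneg hb
  have hlarge : 2 * log b + 1 ≤ c * log m ^ η := (div_le_iff₀' hc).1 hlarge
  have hm : (0:ℝ) ≤ m := m.cast_nonneg
  rw [← rpow_natCast, rpow_def_of_pos (by linarith), rpow_def_of_pos (by linarith), ← exp_add,
    ← exp_add]
  refine exp_le_exp.2 ?_
  nlinarith [mul_le_mul_of_nonneg_left hρ hL, mul_le_mul_of_nonneg_left hlarge hm]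

lemma tendsto_Sgrowth_exponent_atTop {η : ℝ} (hη : 0 < η) :
    Tendsto (fun m : ℕ => ((m : ℝ) * log m ^ η) ^ ((1:ℝ) / (1 + 2 * η))) atTop atTop := by
  refine (tendsto_rpow_atTop (by positivity)).comp
    (tendsto_atTop_mono' atTop ?_ tendsto_natCast_atTop_atTop)
  filter_upwards [((tendsto_rpow_atTop hη).comp
    (tendsto_log_atTop.comp tendsto_natCast_atTop_atTop)).eventually_ge_atTop 1] with m hm
  exact le_mul_of_one_le_right m.cast_nonneg hm

lemma termG_nonneg (b : ℕ) (β : ℝ) (ε : ℕ → ℝ) (n : ℕ) : 0 ≤ termG b β ε n := by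
  unfold termG; positivity

section

variable {b : ℕ} {β η : ℝ} {ε : ℕ → ℝ}

lemma termG_le_logExpDecay {n : ℕ} (hb : 1 ≤ b) (hβ : 0 ≤ β) (hn : 1 ≤ n)
    (hεn : (n : ℝ) ^ (-(1:ℝ) / 2) * log n ^ ((1:ℝ) / 2 + η) ≤ ε n) :
    termG b β ε n ≤ logExpDecay (β * log b) (1 + 2 * η) n := by
  have hb0 : (0:ℝ) < b := by exact_mod_cast hb
  have hlogb : 0 ≤ log b := log_nonneg (by exact_mod_cast hb)
  have key := log_rpow_le_mul_sq (by exact_mod_cast hn) hεn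
  rw [termG, logExpDecay, rpow_def_of_pos hb0]
  gcongr ?_ * exp ?_
  nlinarith [mul_le_mul_of_nonneg_left key (mul_nonneg hβ hlogb)]

lemma summable_termG (hb : 1 < b) (hβ : 0 < β) (hη : 0 < η)
    (hε : ∀ n : ℕ, 2 ≤ n → (n : ℝ) ^ (-(1:ℝ) / 2) * log n ^ ((1:ℝ) / 2 + η) ≤ ε n) :
    Summable (termG b β ε) := by
  have hK : 0 < β * log b := mul_pos hβ (log_pos (by exact_mod_cast hb))
  refine .of_norm_bounded_eventually_nat
    (summable_logExpDecay (p := 1 + 2 * η) hK (by linarith)) ?_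
  filter_upwards [eventually_ge_atTop 2] with n hn
  rw [norm_of_nonneg (termG_nonneg b β ε n)]
  exact termG_le_logExpDecay hb.le hβ.le (by omega) (hε n hn)

lemma tsum_termG_nat_add_le (hb : 1 < b) (hβ : 0 < β) (hη : 0 < η)
    (hε : ∀ n : ℕ, 2 ≤ n → (n : ℝ) ^ (-(1:ℝ) / 2) * log n ^ ((1:ℝ) / 2 + η) ≤ ε n)
    {y : ℝ} {S : ℕ} (hy : 1 ≤ y) (hS : exp y ≤ S) :
    ∑' n, termG b β ε (S + n) ≤ exp (-(β * log b / 2) * y ^ (1 + 2 * η)) *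
      ∑' n, logExpDecay (β * log b / 2) (1 + 2 * η) n := by
  have hK : 0 < β * log b := mul_pos hβ (log_pos (by exact_mod_cast hb))
  have hS2 : 2 ≤ S := by
    have : (2:ℝ) < S := by linarith [exp_one_gt_d9, exp_le_exp.2 hy]
    exact_mod_cast this.le
  calc ∑' n, termG b β ε (S + n) ≤ ∑' n, logExpDecay (β * log b) (1 + 2 * η) (S + n) :=
        Summable.tsum_le_tsum
          (fun n => termG_le_logExpDecay hb.le hβ.le (by omega) (hε _ (by omega)))
          ((summable_termG hb hβ hη hε).comp_injective (add_right_injective S))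
          ((summable_logExpDecay hK (by linarith)).comp_injective (add_right_injective S))
    _ ≤ _ := tsum_logExpDecay_nat_add_le hK (by linarith) (by linarith) hS

lemma tsum_termG_Sgrowth_add_le (hb : 1 < b) (hβ : 0 < β) (hη : 0 < η)
    (hε : ∀ n : ℕ, 2 ≤ n → (n : ℝ) ^ (-(1:ℝ) / 2) * log n ^ ((1:ℝ) / 2 + η) ≤ ε n)
    {m : ℕ} (hm : 2 ≤ ((m : ℝ) * log m ^ η) ^ ((1:ℝ) / (1 + 2 * η))) :
    ∑' n, termG b β ε (Sgrowth η m + n) ≤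
      exp (-(β * log b / 2 / 2 ^ (1 + 2 * η)) * (m * log m ^ η)) *
        ∑' n, logExpDecay (β * log b / 2) (1 + 2 * η) n := by
  have hK : 0 < β * log b := mul_pos hβ (log_pos (by exact_mod_cast hb))
  have hx := div_two_rpow_le_rpow_inv_sub_one_rpow
    (mul_nonneg m.cast_nonneg (rpow_nonneg (log_natCast_nonneg m) η)) (by linarith) hm
  refine (tsum_termG_nat_add_le hb hβ hη hε (by linarith) (exp_sub_one_le_floor_exp
    (by linarith))).trans ?_
  gcongr ?_ * _
  · exact tsum_nonneg (logExpDecay_nonneg _ _)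
  refine exp_le_exp.2 ?_
  rw [neg_mul, neg_mul, neg_le_neg_iff, div_mul_eq_mul_div, mul_div_assoc]
  gcongr

lemma summable_rpow_mul_tsum_termG_Sgrowth_add (hb : 1 < b) (hβ : 0 < β) (hη : 0 < η)
    (hε : ∀ n : ℕ, 2 ≤ n → (n : ℝ) ^ (-(1:ℝ) / 2) * log n ^ ((1:ℝ) / 2 + η) ≤ ε n) :
    Summable fun m : ℕ => (b : ℝ) ^ m * (b : ℝ) ^ (log m ^ (1 + η)) *
      ∑' n, termG b β ε (Sgrowth η m + n) := by
  have hK : 0 < β * log b := mul_pos hβ (log_pos (by exact_mod_cast hb))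
  set C := ∑' n, logExpDecay (β * log b / 2) (1 + 2 * η) n
  refine .of_norm_bounded_eventually_nat (summable_exp_neg_nat.mul_left C) ?_
  filter_upwards [eventually_rpow_mul_exp_le_exp_neg (b := b) (by exact_mod_cast hb.le)
    (c := β * log b / 2 / 2 ^ (1 + 2 * η)) (by positivity) hη,
    (tendsto_Sgrowth_exponent_atTop hη).eventually_ge_atTop 2] with m hgrowth hm
  have hC : 0 ≤ C := tsum_nonneg (logExpDecay_nonneg _ _)
  have hT : 0 ≤ ∑' n, termG b β ε (Sgrowth η m + n) := tsum_nonneg fun n => termG_nonneg b β ε _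
  rw [norm_of_nonneg (by positivity)]
  calc _ ≤ (b : ℝ) ^ m * (b : ℝ) ^ (log m ^ (1 + η)) *
        (exp (-(β * log b / 2 / 2 ^ (1 + 2 * η)) * (m * log m ^ η)) * C) := by
        gcongr
        exact tsum_termG_Sgrowth_add_le hb hβ hη hε hm
    _ = (b : ℝ) ^ m * (b : ℝ) ^ (log m ^ (1 + η)) *
        exp (-(β * log b / 2 / 2 ^ (1 + 2 * η)) * (m * log m ^ η)) * C := by ring
    _ ≤ C * exp (-m) := by rw [mul_comm C]; gcongr

end

theorem double_series_converges_fast_eps_general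
    (b : ℕ) (hb : 2 ≤ b) (β η : ℝ) (hβ : 0 < β) (hη : 0 < η)
    (ε : ℕ → ℝ)
    (hε : ∀ n : ℕ, 2 ≤ n →
      (n : ℝ) ^ (-(1:ℝ) / 2) * Real.log n ^ ((1:ℝ) / 2 + η) ≤ ε n) :
    (∀ j : ℕ, 2 ≤ j → Summable fun n : ℕ => termG b β ε (Sgrowth η j + n)) ∧
    Summable (fun j : ℕ => (b : ℝ) ^ (j + 2) *
      (b : ℝ) ^ (Real.log ((j : ℝ) + 2) ^ (1 + η)) *
      ∑' n : ℕ, termG b β ε (Sgrowth η (j + 2) + n)) := by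
  refine ⟨fun j _ => (summable_termG hb hβ hη hε).comp_injective (add_right_injective _), ?_⟩
  simpa using (summable_nat_add_iff 2).2 (summable_rpow_mul_tsum_termG_Sgrowth_add hb hβ hη hε)

/-- If `ε_n ≥ n^{-1/2} (log n)^{1/2+η}`, `S_j = ⌊exp((j (log j)^η)^{1/(1+2η)})⌋` and
`ρ_j = (log j)^{1+η}`, then `∑_{j≥2} b^j b^{ρ_j} ∑_{n≥S_j} n b^{-β n ε_n²} < ∞`
(inner series summable for each `j ≥ 2`, and the outer series summable). -/
theorem double_series_converges_fast_eps
    (b : ℕ) (hb : 2 ≤ b) (β η : ℝ) (hβ : 0 < β) (hη : 0 < η)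
    (ε : ℕ → ℝ) (hεpos : ∀ n, 2 ≤ n → 0 < ε n)
    (hε : ∀ n : ℕ, 2 ≤ n →
      (n : ℝ) ^ (-(1:ℝ) / 2) * Real.log n ^ ((1:ℝ) / 2 + η) ≤ ε n) :
    (∀ j : ℕ, 2 ≤ j → Summable fun n : ℕ => termG b β ε (Sgrowth η j + n)) ∧
    Summable (fun j : ℕ => (b : ℝ) ^ (j + 2) *
      (b : ℝ) ^ (Real.log ((j : ℝ) + 2) ^ (1 + η)) *
      ∑' n : ℕ, termG b β ε (Sgrowth η (j + 2) + n)) :=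
  double_series_converges_fast_eps_general b hb β η hβ hη ε hε
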